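/- (Weighted Eckart–Young) Let A ∈ ℝ^{L×K}, and Q, R symmetric positive definite of sizes L×L and K×K. Let Q^{1/2}AR^{1/2} = UΣVᵀ be an SVD and set A^{(r)}_{Q,R} = Q^{−1/2} U Σ^{(r)} Vᵀ R^{−1/2}. Then for every B with rank B ≤ r, ‖A − A^{(r)}_{Q,R}‖_{Q,R} ≤ ‖A − B‖_{Q,R}. -/

import Mathlib

/-!
Conjugating by `S = Q^{1/2}` and `T = R^{1/2}` turns the `(Q,R)`-norm into the Frobenius norm and
`A` into `U Σ Vᵀ`, and orthogonal invariance reduces everything to the Frobenius Eckart–Young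
inequality for the rectangular diagonal `Σ` itself. For a competitor `C` of rank at most `r`, let
`P` be the orthogonal projection onto the column space of `C`. Since `(1 - P) C = 0`,
`‖Σ - C‖² ≥ ‖(1 - P) Σ‖² = ∑ σᵢ² (1 - Pᵢᵢ)`, and the weights `Pᵢᵢ ∈ [0, 1]` add up to
`rank C ≤ r`; as the `σᵢ²` decrease, `∑ σᵢ² Pᵢᵢ ≤ ∑_{i < r} σᵢ²`.
-/

open Matrix Finset

theorem sum_mul_le_sum_lt_of_antitone {L r : ℕ} {a : ℕ → ℝ} (ha : Antitone a) (har : 0 ≤ a r)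
    {g : Fin L → ℝ} (hg : ∀ i, g i ∈ Set.Icc 0 1) (hgr : ∑ i, g i ≤ r) :
    ∑ i : Fin L, a i * g i ≤ ∑ i : Fin L, if (i : ℕ) < r then a i else 0 := by
  have hgL : ∑ i, g i ≤ L := by
    simpa using sum_le_sum fun i (_ : i ∈ univ) => (hg i).2
  have hg_card : ∑ i, g i ≤ #{i : Fin L | (i : ℕ) < r} := by
    rw [Fin.card_filter_val_lt, Nat.cast_min]
    exact le_min hgL hgr
  have hpt (i : Fin L) :
      a i * g i ≤ (if (i : ℕ) < r then a i - a r else 0) + a r * g i := by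
    split_ifs with hi
    · nlinarith [ha hi.le, (hg i).2]
    · nlinarith [ha (not_lt.mp hi), (hg i).1]
  calc ∑ i : Fin L, a i * g i
      ≤ ∑ i : Fin L, ((if (i : ℕ) < r then a i - a r else 0) + a r * g i) :=
        sum_le_sum fun i _ => hpt i
    _ = ∑ i : Fin L, (if (i : ℕ) < r then a i else 0)
          - a r * #{i : Fin L | (i : ℕ) < r} + a r * ∑ i, g i := by
        simp only [sum_add_distrib, ← mul_sum, ← sum_filter, sum_sub_distrib, sum_const,
          nsmul_eq_mul]
        ring
    _ ≤ ∑ i : Fin L, if (i : ℕ) < r then a i else 0 := by nlinarith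

namespace Matrix

section Projection

variable {m n : Type*} [Fintype m] [Fintype n]

lemma trace_mul_transpose_self_nonneg (X : Matrix m n ℝ) : 0 ≤ trace (X * Xᵀ) := by
  simpa using (posSemidef_self_mul_conjTranspose X).trace_nonneg

lemma IsStarProjection.transpose_eq {P : Matrix m m ℝ} (hP : IsStarProjection P) : Pᵀ = P := by
  simpa [star_eq_conjTranspose] using hP.isSelfAdjoint.star_eq

lemma IsStarProjection.trace_mul_mul_transpose {P : Matrix m m ℝ} (hP : IsStarProjection P)
    (X : Matrix m n ℝ) : trace (P * X * (P * X)ᵀ) = trace (X * Xᵀ * P) := by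
  rw [transpose_mul, hP.transpose_eq, ← trace_mul_cycle, ← Matrix.mul_assoc,
    Matrix.mul_assoc _ P P, hP.isIdempotentElem.eq]

lemma IsStarProjection.diag_nonneg {P : Matrix m m ℝ} (hP : IsStarProjection P) (i : m) :
    0 ≤ P i i := by
  have h : P * Pᵀ = P := by rw [hP.transpose_eq, hP.isIdempotentElem.eq]
  simpa [h] using (posSemidef_self_mul_conjTranspose P).diag_nonneg (i := i)

variable [DecidableEq m]

lemma IsStarProjection.diag_le_one {P : Matrix m m ℝ} (hP : IsStarProjection P) (i : m) :
    P i i ≤ 1 := by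
  simpa using hP.one_sub.diag_nonneg i

lemma IsStarProjection.trace_sub_trace_mul_le {P : Matrix m m ℝ} (hP : IsStarProjection P)
    {C : Matrix m n ℝ} (hPC : P * C = C) (X : Matrix m n ℝ) :
    trace (X * Xᵀ) - trace (X * Xᵀ * P) ≤ trace ((X - C) * (X - C)ᵀ) := by
  have hC : (1 - P) * C = 0 := by rw [Matrix.sub_mul, hPC, Matrix.one_mul, sub_self]
  calc trace (X * Xᵀ) - trace (X * Xᵀ * P) = trace ((1 - P) * X * ((1 - P) * X)ᵀ) := by
        rw [hP.one_sub.trace_mul_mul_transpose, Matrix.mul_sub, trace_sub, Matrix.mul_one]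
    _ = trace ((1 - P) * (X - C) * ((1 - P) * (X - C))ᵀ) := by
        rw [Matrix.mul_sub (1 - P) X C, hC, sub_zero]
    _ ≤ trace ((X - C) * (X - C)ᵀ) := by
        rw [hP.one_sub.trace_mul_mul_transpose, Matrix.mul_sub, trace_sub, Matrix.mul_one,
          sub_le_self_iff, ← hP.trace_mul_mul_transpose]
        exact trace_mul_transpose_self_nonneg _

lemma exists_isStarProjection_mul_eq_self_trace_eq_rank [DecidableEq n] (C : Matrix m n ℝ) :
    ∃ P : Matrix m m ℝ, IsStarProjection P ∧ P * C = C ∧ trace P = C.rank := by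
  set K := LinearMap.range (toEuclideanLin C)
  set P := (toEuclideanCLM (n := m) (𝕜 := ℝ)).symm K.starProjection
  have hP : toEuclideanLin P = K.starProjection.toLinearMap := by
    rw [← coe_toEuclideanCLM_eq_toEuclideanLin, StarAlgEquiv.apply_symm_apply]
  have hK : LinearMap.IsProj K K.starProjection.toLinearMap :=
    ⟨K.starProjection_apply_mem, fun _ => K.starProjection_eq_self_iff.mpr⟩
  refine ⟨P, isStarProjection_starProjection.map
    (toEuclideanCLM (n := m) (𝕜 := ℝ)).symm.toStarAlgHom, ?_, ?_⟩
  · refine ext_of_mulVec_single fun j => ?_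
    rw [← mulVec_mulVec]
    have hfix := hK.map_id _
      (LinearMap.mem_range_self (toEuclideanLin C) (WithLp.toLp 2 (Pi.single j 1)))
    rw [← hP] at hfix
    simpa using congrArg WithLp.ofLp hfix
  · -- both sides are `finrank K`: the trace of a projection is the dimension of its range
    rw [rank_eq_finrank_range_toLin C (EuclideanSpace.basisFun m ℝ).toBasis
        (EuclideanSpace.basisFun n ℝ).toBasis,
      ← toEuclideanLin_eq_toLin_orthonormal, ← hK.trace, ← hP,
      LinearMap.trace_eq_matrix_trace ℝ (EuclideanSpace.basisFun m ℝ).toBasis,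
      toEuclideanLin_eq_toLin_orthonormal, LinearMap.toMatrix_toLin]

lemma trace_orthogonal_conj_mul_transpose_self {m' n' : Type*} [Fintype m'] [Fintype n']
    [DecidableEq n] {U : Matrix m' m ℝ} {V : Matrix n' n ℝ} (hU : Uᵀ * U = 1) (hV : Vᵀ * V = 1)
    (N : Matrix m n ℝ) : trace (U * N * Vᵀ * (U * N * Vᵀ)ᵀ) = trace (N * Nᵀ) := by
  rw [transpose_mul, transpose_mul, transpose_transpose]
  simp only [Matrix.mul_assoc]
  rw [← Matrix.mul_assoc Vᵀ, hV, Matrix.one_mul, trace_mul_comm]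
  simp only [Matrix.mul_assoc]
  rw [hU, Matrix.mul_one]

omit [DecidableEq m] in
lemma trace_mul_self_mul_mul_self_mul_transpose {S : Matrix m m ℝ} {T : Matrix n n ℝ}
    (hS : S.IsSymm) (hT : T.IsSymm) (Z : Matrix m n ℝ) :
    trace (S * S * Z * (T * T) * Zᵀ) = trace (S * Z * T * (S * Z * T)ᵀ) := by
  rw [transpose_mul, transpose_mul, hS.eq, hT.eq]
  simp only [← Matrix.mul_assoc]
  rw [trace_mul_comm _ S]
  simp only [← Matrix.mul_assoc]

end Projection

def rectDiagonal (L K : ℕ) (σ : ℕ → ℝ) : Matrix (Fin L) (Fin K) ℝ :=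
  of fun i j => if (i : ℕ) = j then σ i else 0

variable {L K : ℕ}

lemma rectDiagonal_sub (σ τ : ℕ → ℝ) :
    rectDiagonal L K σ - rectDiagonal L K τ = rectDiagonal L K (σ - τ) := by
  ext i j
  by_cases h : (i : ℕ) = j <;> simp [rectDiagonal, h]

lemma rectDiagonal_mul_transpose (σ : ℕ → ℝ) :
    rectDiagonal L K σ * (rectDiagonal L K σ)ᵀ =
      diagonal fun i : Fin L => if (i : ℕ) < K then σ i ^ 2 else 0 := by
  ext i k
  rcases eq_or_ne i k with rfl | hik
  · have hterm (j : Fin K) : rectDiagonal L K σ i j * (rectDiagonal L K σ)ᵀ j i =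
        if (i : ℕ) = j then σ i ^ 2 else 0 := by
      simp only [rectDiagonal, transpose_apply, of_apply]
      split_ifs <;> simp [sq]
    rw [diagonal_apply_eq, mul_apply, sum_congr rfl fun j _ => hterm j,
      Fin.sum_univ_eq_sum_range (fun j => if (i : ℕ) = j then σ i ^ 2 else 0), sum_ite_eq]
    simp
  · rw [diagonal_apply_ne _ hik, mul_apply]
    refine sum_eq_zero fun j _ => ?_
    simp only [rectDiagonal, transpose_apply, of_apply]
    split_ifs with hij hkj
    · exact absurd (hij.trans hkj.symm) (Fin.val_ne_of_ne hik)
    all_goals simp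

theorem trace_rectDiagonal_sub_truncate_le {σ : ℕ → ℝ} (hσ : Antitone σ) (hσ0 : ∀ i, 0 ≤ σ i)
    {r : ℕ} {C : Matrix (Fin L) (Fin K) ℝ} (hC : C.rank ≤ r) :
    trace ((rectDiagonal L K σ - rectDiagonal L K fun i => if i < r then σ i else 0) *
        (rectDiagonal L K σ - rectDiagonal L K fun i => if i < r then σ i else 0)ᵀ) ≤
      trace ((rectDiagonal L K σ - C) * (rectDiagonal L K σ - C)ᵀ) := by
  set a : ℕ → ℝ := fun i => if i < K then σ i ^ 2 else 0
  have ha : Antitone a := by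
    intro i j hij
    simp only [a]
    split_ifs with hj hi
    · exact pow_le_pow_left₀ (hσ0 j) (hσ hij) 2
    · omega
    · positivity
    · rfl
  obtain ⟨P, hP, hPC, hPtr⟩ := exists_isStarProjection_mul_eq_self_trace_eq_rank C
  have hPr : trace P ≤ r := hPtr.trans_le (mod_cast hC)
  have htail : trace ((rectDiagonal L K σ - rectDiagonal L K fun i => if i < r then σ i else 0) *
        (rectDiagonal L K σ - rectDiagonal L K fun i => if i < r then σ i else 0)ᵀ) =
      ∑ i : Fin L, a i - ∑ i : Fin L, if (i : ℕ) < r then a i else 0 := by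
    rw [rectDiagonal_sub, rectDiagonal_mul_transpose, trace_diagonal, ← sum_sub_distrib]
    refine sum_congr rfl fun i _ => ?_
    simp only [a, Pi.sub_apply]
    split_ifs <;> simp
  calc _ = ∑ i : Fin L, a i - ∑ i : Fin L, if (i : ℕ) < r then a i else 0 := htail
    _ ≤ ∑ i : Fin L, a i - ∑ i : Fin L, a i * P i i := by
        gcongr ?_ - ?_
        exact sum_mul_le_sum_lt_of_antitone ha (by positivity)
          (fun i => ⟨hP.diag_nonneg i, hP.diag_le_one i⟩) hPr
    _ = trace (rectDiagonal L K σ * (rectDiagonal L K σ)ᵀ) -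
          trace (rectDiagonal L K σ * (rectDiagonal L K σ)ᵀ * P) := by
        simp [rectDiagonal_mul_transpose, trace, diagonal_mul, a]
    _ ≤ _ := hP.trace_sub_trace_mul_le hPC _

theorem eckart_young {U : Matrix (Fin L) (Fin L) ℝ} {V : Matrix (Fin K) (Fin K) ℝ}
    (hU : Uᵀ * U = 1) (hV : Vᵀ * V = 1) {σ : ℕ → ℝ} (hσ : Antitone σ) (hσ0 : ∀ i, 0 ≤ σ i)
    {r : ℕ} {C : Matrix (Fin L) (Fin K) ℝ} (hC : C.rank ≤ r) :
    trace ((U * rectDiagonal L K σ * Vᵀ -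
          U * (rectDiagonal L K fun i => if i < r then σ i else 0) * Vᵀ) *
        (U * rectDiagonal L K σ * Vᵀ -
          U * (rectDiagonal L K fun i => if i < r then σ i else 0) * Vᵀ)ᵀ) ≤
      trace ((U * rectDiagonal L K σ * Vᵀ - C) * (U * rectDiagonal L K σ * Vᵀ - C)ᵀ) := by
  have hC' : C = U * (Uᵀ * C * V) * Vᵀ := by
    rw [← Matrix.mul_assoc, ← Matrix.mul_assoc, mul_eq_one_comm.mp hU, Matrix.one_mul,
      Matrix.mul_assoc, mul_eq_one_comm.mp hV, Matrix.mul_one]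
  have hrank : (Uᵀ * C * V).rank ≤ r :=
    ((rank_mul_le_left _ _).trans (rank_mul_le_right _ _)).trans hC
  rw [hC', ← Matrix.sub_mul, ← Matrix.mul_sub, ← Matrix.sub_mul, ← Matrix.mul_sub,
    trace_orthogonal_conj_mul_transpose_self hU hV,
    trace_orthogonal_conj_mul_transpose_self hU hV]
  exact trace_rectDiagonal_sub_truncate_le hσ hσ0 hrank

end Matrix

theorem weighted_eckart_young_general (L K r : ℕ) (A : Matrix (Fin L) (Fin K) ℝ)
    (Q S : Matrix (Fin L) (Fin L) ℝ) (R T : Matrix (Fin K) (Fin K) ℝ)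
    (hS : S.PosDef) (hT : T.PosDef)
    (hSQ : S * S = Q) (hTR : T * T = R)
    (U : Matrix (Fin L) (Fin L) ℝ) (V : Matrix (Fin K) (Fin K) ℝ)
    (hU : Uᵀ * U = 1) (hV : Vᵀ * V = 1)
    (σ : ℕ → ℝ) (hmono : Antitone σ) (hnonneg : ∀ i, 0 ≤ σ i)
    (hSVD : S * A * T = U * (Matrix.of fun (i : Fin L) (j : Fin K) =>
      if (i : ℕ) = (j : ℕ) then σ (i : ℕ) else 0) * Vᵀ)
    (B : Matrix (Fin L) (Fin K) ℝ) (hB : B.rank ≤ r) :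
    Real.sqrt (Matrix.trace
        (Q * (A - S⁻¹ * (U * (Matrix.of fun (i : Fin L) (j : Fin K) =>
            if (i : ℕ) = (j : ℕ) ∧ (i : ℕ) < r then σ (i : ℕ) else 0) * Vᵀ) * T⁻¹) * R *
          (A - S⁻¹ * (U * (Matrix.of fun (i : Fin L) (j : Fin K) =>
            if (i : ℕ) = (j : ℕ) ∧ (i : ℕ) < r then σ (i : ℕ) else 0) * Vᵀ) * T⁻¹)ᵀ)) ≤
      Real.sqrt (Matrix.trace (Q * (A - B) * R * (A - B)ᵀ)) := by
  subst hSQ hTR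
  change S * A * T = U * rectDiagonal L K σ * Vᵀ at hSVD
  have htrunc : (Matrix.of fun (i : Fin L) (j : Fin K) =>
      if (i : ℕ) = (j : ℕ) ∧ (i : ℕ) < r then σ (i : ℕ) else 0) =
      rectDiagonal L K fun i => if i < r then σ i else 0 := by
    ext i j
    simp [rectDiagonal, ite_and]
  rw [htrunc]
  set Mr := U * (rectDiagonal L K fun i => if i < r then σ i else 0) * Vᵀ
  have hX : S * (A - S⁻¹ * Mr * T⁻¹) * T = U * rectDiagonal L K σ * Vᵀ - Mr := by
    rw [Matrix.mul_sub, Matrix.sub_mul, hSVD, ← Matrix.mul_assoc, ← Matrix.mul_assoc,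
      mul_nonsing_inv _ ((isUnit_iff_isUnit_det S).mp hS.isUnit), Matrix.one_mul,
      nonsing_inv_mul_cancel_right (h := (isUnit_iff_isUnit_det T).mp hT.isUnit)]
  have hY : S * (A - B) * T = U * rectDiagonal L K σ * Vᵀ - S * B * T := by
    rw [Matrix.mul_sub, Matrix.sub_mul, hSVD]
  have hSBT : (S * B * T).rank ≤ r :=
    ((rank_mul_le_left _ _).trans (rank_mul_le_right _ _)).trans hB
  have hS' := isHermitian_iff_isSymm.mp hS.isHermitian
  have hT' := isHermitian_iff_isSymm.mp hT.isHermitian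
  refine Real.sqrt_le_sqrt ?_
  rw [trace_mul_self_mul_mul_self_mul_transpose hS' hT',
    trace_mul_self_mul_mul_self_mul_transpose hS' hT', hX, hY]
  exact eckart_young hU hV hmono hnonneg hSBT

/-- Weighted Eckart–Young theorem in the `(Q,R)`-norm `‖X‖²_{Q,R} = trace (Q X R Xᵀ)`.
Let `S = Q^{1/2}`, `T = R^{1/2}` be the symmetric positive definite square roots, and let
`S A T = U Σ Vᵀ` be an SVD. Then `A^{(r)}_{Q,R} = S⁻¹ U Σ^{(r)} Vᵀ T⁻¹` satisfies
`‖A − A^{(r)}_{Q,R}‖_{Q,R} ≤ ‖A − B‖_{Q,R}` for every `B` of rank at most `r`. -/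
theorem weighted_eckart_young (L K r : ℕ) (A : Matrix (Fin L) (Fin K) ℝ)
    (Q S : Matrix (Fin L) (Fin L) ℝ) (R T : Matrix (Fin K) (Fin K) ℝ)
    (hQ : Q.PosDef) (hR : R.PosDef) (hS : S.PosDef) (hT : T.PosDef)
    (hSQ : S * S = Q) (hTR : T * T = R)
    (U : Matrix (Fin L) (Fin L) ℝ) (V : Matrix (Fin K) (Fin K) ℝ)
    (hU : Uᵀ * U = 1) (hV : Vᵀ * V = 1)
    (σ : ℕ → ℝ) (hmono : Antitone σ) (hnonneg : ∀ i, 0 ≤ σ i)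
    (hSVD : S * A * T = U * (Matrix.of fun (i : Fin L) (j : Fin K) =>
      if (i : ℕ) = (j : ℕ) then σ (i : ℕ) else 0) * Vᵀ)
    (B : Matrix (Fin L) (Fin K) ℝ) (hB : B.rank ≤ r) :
    Real.sqrt (Matrix.trace
        (Q * (A - S⁻¹ * (U * (Matrix.of fun (i : Fin L) (j : Fin K) =>
            if (i : ℕ) = (j : ℕ) ∧ (i : ℕ) < r then σ (i : ℕ) else 0) * Vᵀ) * T⁻¹) * R *
          (A - S⁻¹ * (U * (Matrix.of fun (i : Fin L) (j : Fin K) =>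
            if (i : ℕ) = (j : ℕ) ∧ (i : ℕ) < r then σ (i : ℕ) else 0) * Vᵀ) * T⁻¹)ᵀ)) ≤
      Real.sqrt (Matrix.trace (Q * (A - B) * R * (A - B)ᵀ)) :=
  weighted_eckart_young_general L K r A Q S R T hS hT hSQ hTR U V hU hV σ hmono hnonneg hSVD B hB
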